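/- Let M be a commutative additive monoid and a ∈ M with sr(a) = n < ∞. Then for every positive integer l, 1 + ⌊(n−1)/l⌋ ≤ sr(l·a) ≤ 1 + ⌈(n−1)/l⌉. In particular, if l divides n−1, then sr(l·a) = 1 + (n−1)/l. -/
import Mathlib


/-- `a` satisfies the `n`-stable rank condition in `M`. -/
def SRCond {M : Type*} [AddCommMonoid M] (a : M) (n : ℕ) : Prop :=
  ∀ x y : M, n • a + x = a + y → ∃ e : M, n • a = a + e ∧ e + x = y

/-- The stable rank of `a`: the least positive integer `n` such that `a` satisfies
the `n`-stable rank condition, or `∞` if no such `n` exists. -/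
noncomputable def sr {M : Type*} [AddCommMonoid M] (a : M) : ℕ∞ :=
  sInf {n : ℕ∞ | ∃ m : ℕ, 0 < m ∧ SRCond a m ∧ n = (m : ℕ∞)}

section Aux

variable {M : Type*} [AddCommMonoid M]

lemma srcond_succ {a : M} {m : ℕ} (h : SRCond a m) : SRCond a (m + 1) := by
  intro x y hxy
  obtain ⟨e, he1, he2⟩ := h (a + x) y (by
    rw [succ_nsmul] at hxy
    rw [← hxy]; abel)
  refine ⟨e + a, ?_, ?_⟩
  · rw [succ_nsmul, he1]; abel
  · rw [← he2]; abel

lemma srcond_mono {a : M} {m m' : ℕ} (hm : m ≤ m') (h : SRCond a m) : SRCond a m' := by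
  induction m', hm using Nat.le_induction with
  | base => exact h
  | succ k hk ih => exact srcond_succ ih

lemma srcond_strip {a : M} {m : ℕ} (h : SRCond a m) :
    ∀ j : ℕ, ∀ x y : M, (m + j) • a + x = (1 + j) • a + y →
      ∃ e : M, m • a = a + e ∧ e + x = y := by
  intro j
  induction j with
  | zero =>
    intro x y hxy
    apply h
    simpa using hxy
  | succ j ih =>
    intro x y hxy
    rw [show m + (j + 1) = (m + j) + 1 by ring, succ_nsmul,
        show 1 + (j + 1) = (1 + j) + 1 by ring, succ_nsmul] at hxy
    obtain ⟨e, he1, he2⟩ := ih (a + x) (a + y) (by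
      rw [← add_assoc, ← add_assoc]; exact hxy)
    apply h
    calc m • a + x = e + (a + x) := by rw [he1]; abel
    _ = a + y := he2

lemma srcond_smul_to {a : M} {l k : ℕ} (hl : 0 < l) (h : SRCond (l • a) k) :
    SRCond a (k * l) := by
  obtain ⟨l', rfl⟩ : ∃ l', l = l' + 1 := ⟨l - 1, by omega⟩
  intro x y hxy
  obtain ⟨e, he1, he2⟩ := h (l' • a + x) y (by
    calc k • ((l' + 1) • a) + (l' • a + x)
        = l' • a + ((k * (l' + 1)) • a + x) := by rw [← mul_smul]; abel
    _ = l' • a + (a + y) := by rw [hxy]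
    _ = (l' + 1) • a + y := by rw [succ_nsmul]; abel)
  refine ⟨e + l' • a, ?_, ?_⟩
  · rw [mul_smul, he1, succ_nsmul]; abel
  · rw [add_assoc]; exact he2

lemma srcond_smul_of {a : M} {m l k : ℕ} (hk : k * l = m + (l - 1)) (hl : 0 < l)
    (h : SRCond a m) : SRCond (l • a) k := by
  obtain ⟨l', rfl⟩ : ∃ l', l = l' + 1 := ⟨l - 1, by omega⟩
  have hk' : k * (l' + 1) = m + l' := by omega
  intro x y hxy
  obtain ⟨e, he1, he2⟩ := srcond_strip h l' x y (by
    calc (m + l') • a + x = k • ((l' + 1) • a) + x := by rw [← mul_smul, hk']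
    _ = (l' + 1) • a + y := hxy
    _ = (1 + l') • a + y := by rw [add_comm 1 l'])
  refine ⟨e, ?_, he2⟩
  calc k • ((l' + 1) • a) = (m + l') • a := by rw [← mul_smul, hk']
  _ = (l' + 1) • a + e := by rw [add_nsmul, he1, succ_nsmul]; abel

lemma sr_le_of_srcond {a : M} {m : ℕ} (hm : 0 < m) (hc : SRCond a m) :
    sr a ≤ (m : ℕ∞) :=
  sInf_le ⟨m, hm, hc, rfl⟩

lemma srcond_of_sr {a : M} {n : ℕ} (h : sr a = (n : ℕ∞)) : SRCond a n := by
  have hne : {x : ℕ∞ | ∃ m : ℕ, 0 < m ∧ SRCond a m ∧ x = (m : ℕ∞)}.Nonempty := by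
    by_contra hc
    rw [Set.not_nonempty_iff_eq_empty] at hc
    rw [sr, hc, sInf_empty] at h
    exact (ENat.coe_ne_top n) h.symm
  obtain ⟨m, hm, hcond, heq⟩ := csInf_mem hne
  have : (m : ℕ∞) = (n : ℕ∞) := by rw [← heq, ← h, sr]
  have hmn : m = n := by exact_mod_cast this
  rwa [hmn] at hcond

end Aux

theorem stmt_11 {M : Type*} [AddCommMonoid M] (a : M) (n : ℕ) (hn : 0 < n)
    (h : sr a = (n : ℕ∞)) (l : ℕ) (hl : 0 < l) :
    ((1 + (n - 1) / l : ℕ) : ℕ∞) ≤ sr (l • a) ∧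
    sr (l • a) ≤ ((1 + (n - 1 + (l - 1)) / l : ℕ) : ℕ∞) ∧
    (l ∣ n - 1 → sr (l • a) = ((1 + (n - 1) / l : ℕ) : ℕ∞)) := by
  have hmem : SRCond a n := srcond_of_sr h
  have hmin : ∀ m : ℕ, 0 < m → SRCond a m → n ≤ m := by
    intro m hm hc
    have := sr_le_of_srcond hm hc
    rw [h] at this
    exact_mod_cast this
  -- lower bound
  have hlb : ((1 + (n - 1) / l : ℕ) : ℕ∞) ≤ sr (l • a) := by
    rw [sr]
    apply le_sInf
    rintro _ ⟨k', hk', hcond, rfl⟩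
    have h1 : SRCond a (k' * l) := srcond_smul_to hl hcond
    have h2 : n ≤ k' * l := hmin _ (Nat.mul_pos hk' hl) h1
    have h3 : (n - 1) / l < k' :=
      (Nat.div_lt_iff_lt_mul hl).mpr (lt_of_lt_of_le (by omega) h2)
    exact_mod_cast Nat.cast_le.mpr (by omega : 1 + (n - 1) / l ≤ k')
  -- upper bound
  set d := (n - 1 + (l - 1)) / l with hd
  have hub : sr (l • a) ≤ ((1 + d : ℕ) : ℕ∞) := by
    apply sr_le_of_srcond (Nat.add_pos_left Nat.one_pos d)
    have hmod := Nat.div_add_mod (n - 1 + (l - 1)) l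
    have hmodlt : (n - 1 + (l - 1)) % l < l := Nat.mod_lt _ hl
    rw [← hd] at hmod
    have hprod : (1 + d) * l = l * d + l := by ring
    apply srcond_smul_of (m := l * d + 1) (by omega) hl
    exact srcond_mono (by omega) hmem
  refine ⟨hlb, hub, ?_⟩
  intro hdvd
  obtain ⟨c, hc⟩ := hdvd
  have hdc : d = c := by
    rw [hd, hc, Nat.mul_add_div hl, Nat.div_eq_of_lt (by omega : l - 1 < l)]; omega
  have hnc : (n - 1) / l = c := by rw [hc, Nat.mul_div_cancel_left c hl]
  apply le_antisymm
  · rw [hnc, ← hdc]; exact hub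
  · exact hlb
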